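/- Exactly 16 K-types of the split real group G₂₍₂₎ are u-small; that is, the set of pairs (m₁,m₂) ∈ ℕ² with m₁+m₂ even such that m₁ϖ₁+m₂ϖ₂ lies in the zonotope { Σ_{α ∈ Δ(p)} c_α α : 0 ≤ c_α ≤ 1 for each α ∈ Δ(p) } has exactly 16 elements. -/
import Mathlib

set_option linter.unreachableTactic false
set_option linter.unusedTactic false

/-!
Exactly 16 K-types of the split group G₂₍₂₎ are unitarily small.
-/

noncomputable section

namespace Stmt6

abbrev E3 : Type := EuclideanSpace ℝ (Fin 3)

def e (i : Fin 3) : E3 := EuclideanSpace.single i 1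

/-- The root system of type `G₂`: the 12 vectors `±(eᵢ−eⱼ)` (i≠j) and
`±(3eᵢ − (e₁+e₂+e₃))`. -/
def ΔG2 : Set E3 :=
  {v | (∃ i j, i ≠ j ∧ v = e i - e j) ∨
       (∃ i, v = (3 : ℝ) • e i - (e 0 + e 1 + e 2) ∨
             v = (e 0 + e 1 + e 2) - (3 : ℝ) • e i)}

/-- `γ₁ = e₁ − e₂`. -/
def γ1 : E3 := e 0 - e 1

/-- `γ₂ = −e₁ − e₂ + 2e₃`. -/
def γ2 : E3 := (3 : ℝ) • e 2 - (e 0 + e 1 + e 2)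

/-- The compact roots `{±γ₁, ±γ₂}`. -/
def Δk : Set E3 := {γ1, -γ1, γ2, -γ2}

/-- The noncompact roots (8 of them). -/
def Δp : Set E3 := ΔG2 \ Δk

def ϖ1 : E3 := (2 : ℝ)⁻¹ • γ1

def ϖ2 : E3 := (2 : ℝ)⁻¹ • γ2

/-- `μ` is u-small: it lies in the zonotope
`{Σ_{α ∈ Δ(p)} c_α α : 0 ≤ c_α ≤ 1}`. -/
def USmall (μ : E3) : Prop :=
  ∃ c : E3 → ℝ, (∀ α ∈ Δp, 0 ≤ c α ∧ c α ≤ 1) ∧ μ = ∑ᶠ α ∈ Δp, c α • α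


def a1 : E3 := e 0 - e 2
def a2 : E3 := e 2 - e 0
def a3 : E3 := e 1 - e 2
def a4 : E3 := e 2 - e 1
def a5 : E3 := (3 : ℝ) • e 0 - (e 0 + e 1 + e 2)
def a6 : E3 := (e 0 + e 1 + e 2) - (3 : ℝ) • e 0
def a7 : E3 := (3 : ℝ) • e 1 - (e 0 + e 1 + e 2)
def a8 : E3 := (e 0 + e 1 + e 2) - (3 : ℝ) • e 1

@[simp] lemma c_a1_0 : a1 0 = (1 : ℝ) := by simp [a1, e, EuclideanSpace.single_apply] <;> norm_num
@[simp] lemma c_a1_1 : a1 1 = (0 : ℝ) := by simp [a1, e, EuclideanSpace.single_apply] <;> norm_num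
@[simp] lemma c_a1_2 : a1 2 = (-1 : ℝ) := by simp [a1, e, EuclideanSpace.single_apply] <;> norm_num
@[simp] lemma c_a2_0 : a2 0 = (-1 : ℝ) := by simp [a2, e, EuclideanSpace.single_apply] <;> norm_num
@[simp] lemma c_a2_1 : a2 1 = (0 : ℝ) := by simp [a2, e, EuclideanSpace.single_apply] <;> norm_num
@[simp] lemma c_a2_2 : a2 2 = (1 : ℝ) := by simp [a2, e, EuclideanSpace.single_apply] <;> norm_num
@[simp] lemma c_a3_0 : a3 0 = (0 : ℝ) := by simp [a3, e, EuclideanSpace.single_apply] <;> norm_num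
@[simp] lemma c_a3_1 : a3 1 = (1 : ℝ) := by simp [a3, e, EuclideanSpace.single_apply] <;> norm_num
@[simp] lemma c_a3_2 : a3 2 = (-1 : ℝ) := by simp [a3, e, EuclideanSpace.single_apply] <;> norm_num
@[simp] lemma c_a4_0 : a4 0 = (0 : ℝ) := by simp [a4, e, EuclideanSpace.single_apply] <;> norm_num
@[simp] lemma c_a4_1 : a4 1 = (-1 : ℝ) := by simp [a4, e, EuclideanSpace.single_apply] <;> norm_num
@[simp] lemma c_a4_2 : a4 2 = (1 : ℝ) := by simp [a4, e, EuclideanSpace.single_apply] <;> norm_num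
@[simp] lemma c_a5_0 : a5 0 = (2 : ℝ) := by simp [a5, e, EuclideanSpace.single_apply] <;> norm_num
@[simp] lemma c_a5_1 : a5 1 = (-1 : ℝ) := by simp [a5, e, EuclideanSpace.single_apply] <;> norm_num
@[simp] lemma c_a5_2 : a5 2 = (-1 : ℝ) := by simp [a5, e, EuclideanSpace.single_apply] <;> norm_num
@[simp] lemma c_a6_0 : a6 0 = (-2 : ℝ) := by simp [a6, e, EuclideanSpace.single_apply] <;> norm_num
@[simp] lemma c_a6_1 : a6 1 = (1 : ℝ) := by simp [a6, e, EuclideanSpace.single_apply] <;> norm_num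
@[simp] lemma c_a6_2 : a6 2 = (1 : ℝ) := by simp [a6, e, EuclideanSpace.single_apply] <;> norm_num
@[simp] lemma c_a7_0 : a7 0 = (-1 : ℝ) := by simp [a7, e, EuclideanSpace.single_apply] <;> norm_num
@[simp] lemma c_a7_1 : a7 1 = (2 : ℝ) := by simp [a7, e, EuclideanSpace.single_apply] <;> norm_num
@[simp] lemma c_a7_2 : a7 2 = (-1 : ℝ) := by simp [a7, e, EuclideanSpace.single_apply] <;> norm_num
@[simp] lemma c_a8_0 : a8 0 = (1 : ℝ) := by simp [a8, e, EuclideanSpace.single_apply] <;> norm_num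
@[simp] lemma c_a8_1 : a8 1 = (-2 : ℝ) := by simp [a8, e, EuclideanSpace.single_apply] <;> norm_num
@[simp] lemma c_a8_2 : a8 2 = (1 : ℝ) := by simp [a8, e, EuclideanSpace.single_apply] <;> norm_num
@[simp] lemma c_γ1_0 : γ1 0 = (1 : ℝ) := by simp [γ1, e, EuclideanSpace.single_apply] <;> norm_num
@[simp] lemma c_γ1_1 : γ1 1 = (-1 : ℝ) := by simp [γ1, e, EuclideanSpace.single_apply] <;> norm_num
@[simp] lemma c_γ1_2 : γ1 2 = (0 : ℝ) := by simp [γ1, e, EuclideanSpace.single_apply] <;> norm_num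
@[simp] lemma c_γ2_0 : γ2 0 = (-1 : ℝ) := by simp [γ2, e, EuclideanSpace.single_apply] <;> norm_num
@[simp] lemma c_γ2_1 : γ2 1 = (-1 : ℝ) := by simp [γ2, e, EuclideanSpace.single_apply] <;> norm_num
@[simp] lemma c_γ2_2 : γ2 2 = (2 : ℝ) := by simp [γ2, e, EuclideanSpace.single_apply] <;> norm_num
@[simp] lemma c_ϖ1_0 : ϖ1 0 = (1/2 : ℝ) := by simp [ϖ1, γ1, e, EuclideanSpace.single_apply] <;> norm_num
@[simp] lemma c_ϖ1_1 : ϖ1 1 = (-1/2 : ℝ) := by simp [ϖ1, γ1, e, EuclideanSpace.single_apply] <;> norm_num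
@[simp] lemma c_ϖ1_2 : ϖ1 2 = (0 : ℝ) := by simp [ϖ1, γ1, e, EuclideanSpace.single_apply] <;> norm_num
@[simp] lemma c_ϖ2_0 : ϖ2 0 = (-1/2 : ℝ) := by simp [ϖ2, γ2, e, EuclideanSpace.single_apply] <;> norm_num
@[simp] lemma c_ϖ2_1 : ϖ2 1 = (-1/2 : ℝ) := by simp [ϖ2, γ2, e, EuclideanSpace.single_apply] <;> norm_num
@[simp] lemma c_ϖ2_2 : ϖ2 2 = (1 : ℝ) := by simp [ϖ2, γ2, e, EuclideanSpace.single_apply] <;> norm_num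

lemma ext3 {v w : E3} : v = w ↔ v 0 = w 0 ∧ v 1 = w 1 ∧ v 2 = w 2 := by
  constructor
  · rintro rfl; exact ⟨rfl, rfl, rfl⟩
  · rintro ⟨h0, h1, h2⟩; ext j; fin_cases j <;> assumption

@[simp] lemma ne_1_2 : a1 ≠ a2 := by norm_num [ext3]
@[simp] lemma ne_2_1 : a2 ≠ a1 := ne_1_2.symm
@[simp] lemma ne_1_3 : a1 ≠ a3 := by norm_num [ext3]
@[simp] lemma ne_3_1 : a3 ≠ a1 := ne_1_3.symm
@[simp] lemma ne_1_4 : a1 ≠ a4 := by norm_num [ext3]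
@[simp] lemma ne_4_1 : a4 ≠ a1 := ne_1_4.symm
@[simp] lemma ne_1_5 : a1 ≠ a5 := by norm_num [ext3]
@[simp] lemma ne_5_1 : a5 ≠ a1 := ne_1_5.symm
@[simp] lemma ne_1_6 : a1 ≠ a6 := by norm_num [ext3]
@[simp] lemma ne_6_1 : a6 ≠ a1 := ne_1_6.symm
@[simp] lemma ne_1_7 : a1 ≠ a7 := by norm_num [ext3]
@[simp] lemma ne_7_1 : a7 ≠ a1 := ne_1_7.symm
@[simp] lemma ne_1_8 : a1 ≠ a8 := by norm_num [ext3]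
@[simp] lemma ne_8_1 : a8 ≠ a1 := ne_1_8.symm
@[simp] lemma ne_2_3 : a2 ≠ a3 := by norm_num [ext3]
@[simp] lemma ne_3_2 : a3 ≠ a2 := ne_2_3.symm
@[simp] lemma ne_2_4 : a2 ≠ a4 := by norm_num [ext3]
@[simp] lemma ne_4_2 : a4 ≠ a2 := ne_2_4.symm
@[simp] lemma ne_2_5 : a2 ≠ a5 := by norm_num [ext3]
@[simp] lemma ne_5_2 : a5 ≠ a2 := ne_2_5.symm
@[simp] lemma ne_2_6 : a2 ≠ a6 := by norm_num [ext3]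
@[simp] lemma ne_6_2 : a6 ≠ a2 := ne_2_6.symm
@[simp] lemma ne_2_7 : a2 ≠ a7 := by norm_num [ext3]
@[simp] lemma ne_7_2 : a7 ≠ a2 := ne_2_7.symm
@[simp] lemma ne_2_8 : a2 ≠ a8 := by norm_num [ext3]
@[simp] lemma ne_8_2 : a8 ≠ a2 := ne_2_8.symm
@[simp] lemma ne_3_4 : a3 ≠ a4 := by norm_num [ext3]
@[simp] lemma ne_4_3 : a4 ≠ a3 := ne_3_4.symm
@[simp] lemma ne_3_5 : a3 ≠ a5 := by norm_num [ext3]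
@[simp] lemma ne_5_3 : a5 ≠ a3 := ne_3_5.symm
@[simp] lemma ne_3_6 : a3 ≠ a6 := by norm_num [ext3]
@[simp] lemma ne_6_3 : a6 ≠ a3 := ne_3_6.symm
@[simp] lemma ne_3_7 : a3 ≠ a7 := by norm_num [ext3]
@[simp] lemma ne_7_3 : a7 ≠ a3 := ne_3_7.symm
@[simp] lemma ne_3_8 : a3 ≠ a8 := by norm_num [ext3]
@[simp] lemma ne_8_3 : a8 ≠ a3 := ne_3_8.symm
@[simp] lemma ne_4_5 : a4 ≠ a5 := by norm_num [ext3]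
@[simp] lemma ne_5_4 : a5 ≠ a4 := ne_4_5.symm
@[simp] lemma ne_4_6 : a4 ≠ a6 := by norm_num [ext3]
@[simp] lemma ne_6_4 : a6 ≠ a4 := ne_4_6.symm
@[simp] lemma ne_4_7 : a4 ≠ a7 := by norm_num [ext3]
@[simp] lemma ne_7_4 : a7 ≠ a4 := ne_4_7.symm
@[simp] lemma ne_4_8 : a4 ≠ a8 := by norm_num [ext3]
@[simp] lemma ne_8_4 : a8 ≠ a4 := ne_4_8.symm
@[simp] lemma ne_5_6 : a5 ≠ a6 := by norm_num [ext3]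
@[simp] lemma ne_6_5 : a6 ≠ a5 := ne_5_6.symm
@[simp] lemma ne_5_7 : a5 ≠ a7 := by norm_num [ext3]
@[simp] lemma ne_7_5 : a7 ≠ a5 := ne_5_7.symm
@[simp] lemma ne_5_8 : a5 ≠ a8 := by norm_num [ext3]
@[simp] lemma ne_8_5 : a8 ≠ a5 := ne_5_8.symm
@[simp] lemma ne_6_7 : a6 ≠ a7 := by norm_num [ext3]
@[simp] lemma ne_7_6 : a7 ≠ a6 := ne_6_7.symm
@[simp] lemma ne_6_8 : a6 ≠ a8 := by norm_num [ext3]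
@[simp] lemma ne_8_6 : a8 ≠ a6 := ne_6_8.symm
@[simp] lemma ne_7_8 : a7 ≠ a8 := by norm_num [ext3]
@[simp] lemma ne_8_7 : a8 ≠ a7 := ne_7_8.symm

open Classical in
def FΔ : Finset E3 := {a1, a2, a3, a4, a5, a6, a7, a8}

lemma ΔpF : Δp = ↑FΔ := by
  ext v
  simp only [Δp, Set.mem_diff, ΔG2, Set.mem_setOf_eq, FΔ, Finset.coe_insert,
    Set.mem_insert_iff, Finset.coe_singleton, Set.mem_singleton_iff]
  constructor
  · rintro ⟨hG, hk⟩
    rcases hG with ⟨i, j, hij, rfl⟩ | ⟨i, rfl | rfl⟩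
    · fin_cases i <;> fin_cases j <;>
        first
          | exact absurd rfl hij
          | (solve | (simp [ext3, e, EuclideanSpace.single_apply, a1, a2, a3, a4] <;> norm_num))
          | (refine absurd ?_ hk
             simp [Δk, ext3, e, EuclideanSpace.single_apply] <;> norm_num)
    · fin_cases i <;>
        first
          | (solve | (simp [ext3, e, EuclideanSpace.single_apply, a5, a6, a7, a8] <;> norm_num))
          | (refine absurd ?_ hk
             simp [Δk, ext3, e, EuclideanSpace.single_apply] <;> norm_num)
    · fin_cases i <;>
        first
          | (solve | (simp [ext3, e, EuclideanSpace.single_apply, a5, a6, a7, a8] <;> norm_num))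
          | (refine absurd ?_ hk
             simp [Δk, ext3, e, EuclideanSpace.single_apply] <;> norm_num)
  · rintro (rfl | rfl | rfl | rfl | rfl | rfl | rfl | rfl)
    · exact ⟨Or.inl ⟨0, 2, by decide, rfl⟩, by norm_num [Δk, ext3]⟩
    · exact ⟨Or.inl ⟨2, 0, by decide, rfl⟩, by norm_num [Δk, ext3]⟩
    · exact ⟨Or.inl ⟨1, 2, by decide, rfl⟩, by norm_num [Δk, ext3]⟩
    · exact ⟨Or.inl ⟨2, 1, by decide, rfl⟩, by norm_num [Δk, ext3]⟩
    · exact ⟨Or.inr ⟨0, Or.inl rfl⟩, by norm_num [Δk, ext3]⟩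
    · exact ⟨Or.inr ⟨0, Or.inr rfl⟩, by norm_num [Δk, ext3]⟩
    · exact ⟨Or.inr ⟨1, Or.inl rfl⟩, by norm_num [Δk, ext3]⟩
    · exact ⟨Or.inr ⟨1, Or.inr rfl⟩, by norm_num [Δk, ext3]⟩

lemma sum_F (g : E3 → E3) :
    ∑ α ∈ FΔ, g α =
      g a1 + (g a2 + (g a3 + (g a4 + (g a5 + (g a6 + (g a7 + g a8)))))) := by
  simp [FΔ, Finset.sum_insert, Finset.mem_insert, Finset.mem_singleton]

lemma mem_Δp : a1 ∈ Δp ∧ a2 ∈ Δp ∧ a3 ∈ Δp ∧ a4 ∈ Δp ∧ a5 ∈ Δp ∧ a6 ∈ Δp ∧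
    a7 ∈ Δp ∧ a8 ∈ Δp := by
  rw [ΔpF]
  refine ⟨?_, ?_, ?_, ?_, ?_, ?_, ?_, ?_⟩ <;> simp [FΔ, Finset.mem_insert]

lemma usmall_bounds {x y : ℝ} (h : USmall (x • ϖ1 + y • ϖ2)) :
    x + y ≤ 8 ∧ x + 3 * y ≤ 12 := by
  obtain ⟨c, hc, hsum⟩ := h
  rw [ΔpF, finsum_mem_coe_finset, sum_F] at hsum
  obtain ⟨m1, m2, m3, m4, m5, m6, m7, m8⟩ := mem_Δp
  have b1 := hc a1 m1; have b2 := hc a2 m2; have b3 := hc a3 m3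
  have b4 := hc a4 m4; have b5 := hc a5 m5; have b6 := hc a6 m6
  have b7 := hc a7 m7; have b8 := hc a8 m8
  have h0 := congrArg (fun v : E3 => v 0) hsum
  have h1 := congrArg (fun v : E3 => v 1) hsum
  have h2 := congrArg (fun v : E3 => v 2) hsum
  simp only [PiLp.add_apply, PiLp.smul_apply, smul_eq_mul,
    c_a1_0, c_a1_1, c_a1_2, c_a2_0, c_a2_1, c_a2_2, c_a3_0, c_a3_1, c_a3_2,
    c_a4_0, c_a4_1, c_a4_2, c_a5_0, c_a5_1, c_a5_2, c_a6_0, c_a6_1, c_a6_2,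
    c_a7_0, c_a7_1, c_a7_2, c_a8_0, c_a8_1, c_a8_2,
    c_ϖ1_0, c_ϖ1_1, c_ϖ1_2, c_ϖ2_0, c_ϖ2_1, c_ϖ2_2] at h0 h1 h2
  constructor <;>
    linarith [b1.1, b1.2, b2.1, b2.2, b3.1, b3.2, b4.1, b4.2, b5.1, b5.2,
      b6.1, b6.2, b7.1, b7.2, b8.1, b8.2]

lemma usmall_of_eight (c1 c2 c3 c4 c5 c6 c7 c8 : ℝ)
    (h1 : 0 ≤ c1 ∧ c1 ≤ 1) (h2 : 0 ≤ c2 ∧ c2 ≤ 1) (h3 : 0 ≤ c3 ∧ c3 ≤ 1)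
    (h4 : 0 ≤ c4 ∧ c4 ≤ 1) (h5 : 0 ≤ c5 ∧ c5 ≤ 1) (h6 : 0 ≤ c6 ∧ c6 ≤ 1)
    (h7 : 0 ≤ c7 ∧ c7 ≤ 1) (h8 : 0 ≤ c8 ∧ c8 ≤ 1) (μ : E3)
    (hμ : μ = c1 • a1 + (c2 • a2 + (c3 • a3 + (c4 • a4 +
      (c5 • a5 + (c6 • a6 + (c7 • a7 + c8 • a8))))))) : USmall μ := by
  classical
  refine ⟨fun v => if v = a1 then c1 else if v = a2 then c2 else if v = a3 then c3
    else if v = a4 then c4 else if v = a5 then c5 else if v = a6 then c6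
    else if v = a7 then c7 else if v = a8 then c8 else 0, ?_, ?_⟩
  · intro α _
    dsimp only
    split_ifs <;>
      first
        | exact h1 | exact h2 | exact h3 | exact h4 | exact h5 | exact h6
        | exact h7 | exact h8 | exact ⟨le_refl 0, zero_le_one⟩
  · rw [ΔpF, finsum_mem_coe_finset, sum_F]
    simpa using hμ

lemma u_0_0 : USmall ((0 : ℝ) • ϖ1 + (0 : ℝ) • ϖ2) :=
  usmall_of_eight 0 0 0 0 0 0 0 0 (by norm_num) (by norm_num) (by norm_num) (by norm_num)
    (by norm_num) (by norm_num) (by norm_num) (by norm_num) _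
    (by rw [ext3]; refine ⟨by norm_num, by norm_num, by norm_num⟩)
lemma u_2_0 : USmall ((2 : ℝ) • ϖ1 + (0 : ℝ) • ϖ2) :=
  usmall_of_eight 1 0 0 1 0 0 0 0 (by norm_num) (by norm_num) (by norm_num) (by norm_num)
    (by norm_num) (by norm_num) (by norm_num) (by norm_num) _
    (by rw [ext3]; refine ⟨by norm_num, by norm_num, by norm_num⟩)
lemma u_4_0 : USmall ((4 : ℝ) • ϖ1 + (0 : ℝ) • ϖ2) :=
  usmall_of_eight 0 1 1 0 1 0 0 1 (by norm_num) (by norm_num) (by norm_num) (by norm_num)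
    (by norm_num) (by norm_num) (by norm_num) (by norm_num) _
    (by rw [ext3]; refine ⟨by norm_num, by norm_num, by norm_num⟩)
lemma u_6_0 : USmall ((6 : ℝ) • ϖ1 + (0 : ℝ) • ϖ2) :=
  usmall_of_eight 0 0 0 0 1 0 0 1 (by norm_num) (by norm_num) (by norm_num) (by norm_num)
    (by norm_num) (by norm_num) (by norm_num) (by norm_num) _
    (by rw [ext3]; refine ⟨by norm_num, by norm_num, by norm_num⟩)
lemma u_8_0 : USmall ((8 : ℝ) • ϖ1 + (0 : ℝ) • ϖ2) :=
  usmall_of_eight 1 0 0 1 1 0 0 1 (by norm_num) (by norm_num) (by norm_num) (by norm_num)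
    (by norm_num) (by norm_num) (by norm_num) (by norm_num) _
    (by rw [ext3]; refine ⟨by norm_num, by norm_num, by norm_num⟩)
lemma u_1_1 : USmall ((1 : ℝ) • ϖ1 + (1 : ℝ) • ϖ2) :=
  usmall_of_eight 0 0 0 1 0 0 0 0 (by norm_num) (by norm_num) (by norm_num) (by norm_num)
    (by norm_num) (by norm_num) (by norm_num) (by norm_num) _
    (by rw [ext3]; refine ⟨by norm_num, by norm_num, by norm_num⟩)
lemma u_3_1 : USmall ((3 : ℝ) • ϖ1 + (1 : ℝ) • ϖ2) :=
  usmall_of_eight 0 0 0 0 0 0 0 1 (by norm_num) (by norm_num) (by norm_num) (by norm_num)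
    (by norm_num) (by norm_num) (by norm_num) (by norm_num) _
    (by rw [ext3]; refine ⟨by norm_num, by norm_num, by norm_num⟩)
lemma u_5_1 : USmall ((5 : ℝ) • ϖ1 + (1 : ℝ) • ϖ2) :=
  usmall_of_eight 0 1 0 0 1 0 0 1 (by norm_num) (by norm_num) (by norm_num) (by norm_num)
    (by norm_num) (by norm_num) (by norm_num) (by norm_num) _
    (by rw [ext3]; refine ⟨by norm_num, by norm_num, by norm_num⟩)
lemma u_7_1 : USmall ((7 : ℝ) • ϖ1 + (1 : ℝ) • ϖ2) :=
  usmall_of_eight 0 0 0 1 1 0 0 1 (by norm_num) (by norm_num) (by norm_num) (by norm_num)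
    (by norm_num) (by norm_num) (by norm_num) (by norm_num) _
    (by rw [ext3]; refine ⟨by norm_num, by norm_num, by norm_num⟩)
lemma u_0_2 : USmall ((0 : ℝ) • ϖ1 + (2 : ℝ) • ϖ2) :=
  usmall_of_eight 0 0 0 0 0 1 0 1 (by norm_num) (by norm_num) (by norm_num) (by norm_num)
    (by norm_num) (by norm_num) (by norm_num) (by norm_num) _
    (by rw [ext3]; refine ⟨by norm_num, by norm_num, by norm_num⟩)
lemma u_2_2 : USmall ((2 : ℝ) • ϖ1 + (2 : ℝ) • ϖ2) :=
  usmall_of_eight 0 1 0 0 0 0 0 1 (by norm_num) (by norm_num) (by norm_num) (by norm_num)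
    (by norm_num) (by norm_num) (by norm_num) (by norm_num) _
    (by rw [ext3]; refine ⟨by norm_num, by norm_num, by norm_num⟩)
lemma u_4_2 : USmall ((4 : ℝ) • ϖ1 + (2 : ℝ) • ϖ2) :=
  usmall_of_eight 0 0 0 1 0 0 0 1 (by norm_num) (by norm_num) (by norm_num) (by norm_num)
    (by norm_num) (by norm_num) (by norm_num) (by norm_num) _
    (by rw [ext3]; refine ⟨by norm_num, by norm_num, by norm_num⟩)
lemma u_6_2 : USmall ((6 : ℝ) • ϖ1 + (2 : ℝ) • ϖ2) :=
  usmall_of_eight 0 1 0 1 1 0 0 1 (by norm_num) (by norm_num) (by norm_num) (by norm_num)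
    (by norm_num) (by norm_num) (by norm_num) (by norm_num) _
    (by rw [ext3]; refine ⟨by norm_num, by norm_num, by norm_num⟩)
lemma u_1_3 : USmall ((1 : ℝ) • ϖ1 + (3 : ℝ) • ϖ2) :=
  usmall_of_eight 0 0 0 1 0 1 0 1 (by norm_num) (by norm_num) (by norm_num) (by norm_num)
    (by norm_num) (by norm_num) (by norm_num) (by norm_num) _
    (by rw [ext3]; refine ⟨by norm_num, by norm_num, by norm_num⟩)
lemma u_3_3 : USmall ((3 : ℝ) • ϖ1 + (3 : ℝ) • ϖ2) :=
  usmall_of_eight 0 1 0 1 0 0 0 1 (by norm_num) (by norm_num) (by norm_num) (by norm_num)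
    (by norm_num) (by norm_num) (by norm_num) (by norm_num) _
    (by rw [ext3]; refine ⟨by norm_num, by norm_num, by norm_num⟩)
lemma u_0_4 : USmall ((0 : ℝ) • ϖ1 + (4 : ℝ) • ϖ2) :=
  usmall_of_eight 0 1 0 1 0 1 0 1 (by norm_num) (by norm_num) (by norm_num) (by norm_num)
    (by norm_num) (by norm_num) (by norm_num) (by norm_num) _
    (by rw [ext3]; refine ⟨by norm_num, by norm_num, by norm_num⟩)


def F16 : Finset (ℕ × ℕ) :=
  {(0,0), (2,0), (4,0), (6,0), (8,0), (1,1), (3,1), (5,1), (7,1),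
   (0,2), (2,2), (4,2), (6,2), (1,3), (3,3), (0,4)}

/-- Exactly 16 K-types `m₁ϖ₁ + m₂ϖ₂` (with `(m₁,m₂) ∈ ℕ²`, `m₁+m₂` even) of
G₂₍₂₎ are u-small. -/
theorem usmall_count_G2 :
    {p : ℕ × ℕ | Even (p.1 + p.2) ∧
      USmall ((p.1 : ℝ) • ϖ1 + (p.2 : ℝ) • ϖ2)}.ncard = 16 := by
  have hset : {p : ℕ × ℕ | Even (p.1 + p.2) ∧
      USmall ((p.1 : ℝ) • ϖ1 + (p.2 : ℝ) • ϖ2)} = ↑F16 := by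
    ext ⟨m1, m2⟩
    simp only [Set.mem_setOf_eq, F16, Finset.coe_insert, Set.mem_insert_iff,
      Finset.coe_singleton, Set.mem_singleton_iff, Prod.mk.injEq]
    constructor
    · rintro ⟨⟨k, hk⟩, hu⟩
      obtain ⟨hb1, hb2⟩ := usmall_bounds hu
      have hb1' : m1 + m2 ≤ 8 := by exact_mod_cast hb1
      have hb2' : m1 + 3 * m2 ≤ 12 := by exact_mod_cast hb2
      have h4 : m2 ≤ 4 := by omega
      have h8 : m1 ≤ 8 := by omega
      interval_cases m1 <;> interval_cases m2 <;> simp_all <;> omega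
    · rintro (⟨rfl, rfl⟩ | ⟨rfl, rfl⟩ | ⟨rfl, rfl⟩ | ⟨rfl, rfl⟩ | ⟨rfl, rfl⟩ |
        ⟨rfl, rfl⟩ | ⟨rfl, rfl⟩ | ⟨rfl, rfl⟩ | ⟨rfl, rfl⟩ | ⟨rfl, rfl⟩ |
        ⟨rfl, rfl⟩ | ⟨rfl, rfl⟩ | ⟨rfl, rfl⟩ | ⟨rfl, rfl⟩ | ⟨rfl, rfl⟩ | ⟨rfl, rfl⟩)
      · exact ⟨by decide, by simpa using u_0_0⟩
      · exact ⟨by decide, by simpa using u_2_0⟩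
      · exact ⟨by decide, by simpa using u_4_0⟩
      · exact ⟨by decide, by simpa using u_6_0⟩
      · exact ⟨by decide, by simpa using u_8_0⟩
      · exact ⟨by decide, by simpa using u_1_1⟩
      · exact ⟨by decide, by simpa using u_3_1⟩
      · exact ⟨by decide, by simpa using u_5_1⟩
      · exact ⟨by decide, by simpa using u_7_1⟩
      · exact ⟨by decide, by simpa using u_0_2⟩
      · exact ⟨by decide, by simpa using u_2_2⟩
      · exact ⟨by decide, by simpa using u_4_2⟩
      · exact ⟨by decide, by simpa using u_6_2⟩
      · exact ⟨by decide, by simpa using u_1_3⟩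
      · exact ⟨by decide, by simpa using u_3_3⟩
      · exact ⟨by decide, by simpa using u_0_4⟩
  rw [hset, Set.ncard_coe_finset]
  decide

end Stmt6
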